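/- (Lemma B.3, GMM version of Lemma 3.1) Under the panel GMM setup with groups Ĝ_k, Ĝ_{k'}, matrix θ, and perturbed vector B(φ), assume P_θB̂ ≠ 0 and set ρ := ‖P_θB̂‖₂, c := (θ^⊤θ)^{-1}θ^⊤B̂, and, for fixed i, i' ∈ {1,…,N}, d := v_i w_i^⊤c − v_{i'} w_{i'}^⊤c. Then for every φ ∈ ℝ, ‖β_i(φ) − β_{i'}(φ)‖²_{A_i} = aφ² + bφ + γ, where a = ‖d/ρ‖²_{A_i}, b = (2/ρ)·d^⊤A_i(β̂_i − β̂_{i'} − d), and γ = ‖β̂_i − β̂_{i'} − d‖²_{A_i}. -/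

import Mathlib

open Matrix
open scoped BigOperators

noncomputable section

/-- Euclidean norm of a real vector. -/
def eunorm {n : Type*} [Fintype n] (v : n → ℝ) : ℝ := Real.sqrt (v ⬝ᵥ v)

open scoped Classical in
/-- The direction `a/‖a‖₂` of a vector, with `dir 0 = 0`. -/
def dir {n : Type*} [Fintype n] (v : n → ℝ) : n → ℝ :=
  if v = 0 then 0 else (eunorm v)⁻¹ • v

/-- The `i`-th `p`-block of a stacked vector in `ℝ^{Np}`. -/
def blk {N p : ℕ} (B : Fin N × Fin p → ℝ) (i : Fin N) : Fin p → ℝ := fun a => B (i, a)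

/-- The squared weighted norm `‖u‖²_A = uᵀAu`. -/
def qnorm {p : ℕ} (A : Matrix (Fin p) (Fin p) ℝ) (u : Fin p → ℝ) : ℝ := u ⬝ᵥ (A *ᵥ u)

/-!
Writing `P B̂ = θ c` and `ρ = ‖θ c‖₂`, the perturbed vector is `B(φ) = (φ/ρ) θ c + (B̂ - θ c)`.
The `i`-th block of `θ c` is `v_i w_iᵀ c`, so `β_i(φ) - β_{i'}(φ) = (φ/ρ) d + (β̂_i - β̂_{i'} - d)`,
and expanding the quadratic form of the symmetric matrix `A_i` gives the three coefficients.
-/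

namespace Matrix

theorem isSymm_transpose_mul_mul_self {m n : Type*} [Fintype m] {R : Type*} [CommSemiring R]
    {S : Matrix m m R} (hS : S.IsSymm) (M : Matrix m n R) : (Mᵀ * S * M).IsSymm := by
  rw [IsSymm, transpose_mul, transpose_mul, transpose_transpose, hS.eq, Matrix.mul_assoc]

theorem IsSymm.dotProduct_mulVec_comm {n : Type*} [Fintype n] {R : Type*} [CommSemiring R]
    {S : Matrix n n R} (hS : S.IsSymm) (u v : n → R) : u ⬝ᵥ (S *ᵥ v) = v ⬝ᵥ (S *ᵥ u) := by
  rw [dotProduct_mulVec, ← mulVec_transpose, hS.eq, dotProduct_comm]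

end Matrix

theorem dir_of_ne_zero {n : Type*} [Fintype n] {v : n → ℝ} (hv : v ≠ 0) :
    dir v = (eunorm v)⁻¹ • v := if_neg hv

theorem qnorm_smul {p : ℕ} (A : Matrix (Fin p) (Fin p) ℝ) (t : ℝ) (u : Fin p → ℝ) :
    qnorm A (t • u) = t ^ 2 * qnorm A u := by
  simp only [qnorm, mulVec_smul, dotProduct_smul, smul_dotProduct, smul_eq_mul]
  ring

theorem qnorm_smul_add {p : ℕ} {A : Matrix (Fin p) (Fin p) ℝ} (hA : A.IsSymm) (t : ℝ)
    (u e : Fin p → ℝ) :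
    qnorm A (t • u + e) = t ^ 2 * qnorm A u + 2 * t * (u ⬝ᵥ (A *ᵥ e)) + qnorm A e := by
  have hcross : e ⬝ᵥ (A *ᵥ u) = u ⬝ᵥ (A *ᵥ e) := hA.dotProduct_mulVec_comm e u
  simp only [qnorm, mulVec_add, mulVec_smul, dotProduct_add, add_dotProduct, dotProduct_smul,
    smul_dotProduct, smul_eq_mul, hcross]
  ring

section blk

variable {N p : ℕ}

@[simp] theorem blk_add (B B' : Fin N × Fin p → ℝ) (j : Fin N) :
    blk (B + B') j = blk B j + blk B' j := rfl

@[simp] theorem blk_sub (B B' : Fin N × Fin p → ℝ) (j : Fin N) :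
    blk (B - B') j = blk B j - blk B' j := rfl

@[simp] theorem blk_smul (t : ℝ) (B : Fin N × Fin p → ℝ) (j : Fin N) :
    blk (t • B) j = t • blk B j := rfl

theorem blk_mulVec_eq_smul_transpose_mulVec {v : Fin N → ℝ} {w : Fin N → Matrix (Fin p) (Fin p) ℝ}
    {θ : Matrix (Fin N × Fin p) (Fin p) ℝ} (hθ : ∀ i a b, θ (i, a) b = v i * w i b a)
    (c : Fin p → ℝ) (j : Fin N) : blk (θ *ᵥ c) j = v j • ((w j)ᵀ *ᵥ c) := by
  funext a
  simp only [blk, mulVec, dotProduct, hθ, Pi.smul_apply, smul_eq_mul, transpose_apply,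
    Finset.mul_sum, mul_assoc]

end blk

theorem gmm_block_difference_is_quadratic_in_phi_general
    (N T p q : ℕ)
    (x : Fin N → Matrix (Fin T) (Fin p) ℝ) (z : Fin N → Matrix (Fin T) (Fin q) ℝ)
    (Ω : Fin N → Matrix (Fin q) (Fin q) ℝ) (hΩ : ∀ i, (Ω i)ᵀ = Ω i)
    (A : Fin N → Matrix (Fin p) (Fin p) ℝ)
    (hAdef : ∀ i, A i = (x i)ᵀ * z i * Ω i * (z i)ᵀ * x i)
    (βhat : Fin N → Fin p → ℝ)
    (Bhat : Fin N × Fin p → ℝ) (hB : ∀ i a, Bhat (i, a) = βhat i a)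
    (v : Fin N → ℝ)
    (w : Fin N → Matrix (Fin p) (Fin p) ℝ)
    (θ : Matrix (Fin N × Fin p) (Fin p) ℝ)
    (hθ : ∀ i a b, θ (i, a) b = v i * w i b a)
    (P : Matrix (Fin N × Fin p) (Fin N × Fin p) ℝ)
    (hP : P = θ * (θᵀ * θ)⁻¹ * θᵀ)
    (hPB : P *ᵥ Bhat ≠ 0)
    (ρ : ℝ) (hρ : ρ = eunorm (P *ᵥ Bhat))
    (c : Fin p → ℝ) (hc : c = (θᵀ * θ)⁻¹ *ᵥ (θᵀ *ᵥ Bhat))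
    (Bφ : ℝ → Fin N × Fin p → ℝ)
    (hBφ : ∀ φ, Bφ φ = φ • dir (P *ᵥ Bhat) + (1 - P) *ᵥ Bhat)
    (i i' : Fin N)
    (d : Fin p → ℝ)
    (hd : d = v i • ((w i)ᵀ *ᵥ c) - v i' • ((w i')ᵀ *ᵥ c))
    (a b γ : ℝ)
    (ha : a = qnorm (A i) (ρ⁻¹ • d))
    (hb : b = (2 / ρ) * (d ⬝ᵥ ((A i) *ᵥ (βhat i - βhat i' - d))))
    (hγ : γ = qnorm (A i) (βhat i - βhat i' - d)) :
    ∀ φ : ℝ,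
      qnorm (A i) (blk (Bφ φ) i - blk (Bφ φ) i') = a * φ ^ 2 + b * φ + γ := by
  intro φ
  have hAsymm : (A i).IsSymm := by
    have hA : A i = ((z i)ᵀ * x i)ᵀ * Ω i * ((z i)ᵀ * x i) := by
      rw [hAdef, transpose_mul, transpose_transpose, Matrix.mul_assoc _ (z i)ᵀ]
    exact hA ▸ isSymm_transpose_mul_mul_self (hΩ i) _
  have hPBc : P *ᵥ Bhat = θ *ᵥ c := by rw [hP, hc, mulVec_mulVec, mulVec_mulVec]
  have hBφc : Bφ φ = (φ * ρ⁻¹) • (θ *ᵥ c) + (Bhat - θ *ᵥ c) := by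
    rw [hBφ, dir_of_ne_zero hPB, ← hρ, sub_mulVec, one_mulVec, hPBc, smul_smul]
  have hblkB : ∀ j, blk Bhat j = βhat j := fun j => funext (hB j)
  have hdiff : blk (Bφ φ) i - blk (Bφ φ) i' = (φ * ρ⁻¹) • d + (βhat i - βhat i' - d) := by
    rw [hd]
    simp only [hBφc, blk_add, blk_sub, blk_smul, hblkB, blk_mulVec_eq_smul_transpose_mulVec hθ]
    module
  rw [hdiff, qnorm_smul_add hAsymm, ha, hb, hγ, qnorm_smul]
  ring

/-- **Lemma B.3, GMM version of Lemma 3.1.** The squared `A_i`-norm of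
the difference of two perturbed blocks is a quadratic polynomial `aφ² + bφ + γ`. -/
theorem gmm_block_difference_is_quadratic_in_phi
    (N T p q K : ℕ) (hN : 0 < N) (hT : 0 < T) (hp : 0 < p) (hq : 0 < q) (hK : 0 < K)
    (x : Fin N → Matrix (Fin T) (Fin p) ℝ) (z : Fin N → Matrix (Fin T) (Fin q) ℝ)
    (Ω : Fin N → Matrix (Fin q) (Fin q) ℝ) (hΩ : ∀ i, (Ω i)ᵀ = Ω i)
    (y : Fin N → Fin T → ℝ)
    (A : Fin N → Matrix (Fin p) (Fin p) ℝ)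
    (hAdef : ∀ i, A i = (x i)ᵀ * z i * Ω i * (z i)ᵀ * x i)
    (hA : ∀ i, IsUnit (A i).det)
    (βhat : Fin N → Fin p → ℝ)
    (hβ : ∀ i, βhat i = (A i)⁻¹ *ᵥ (((x i)ᵀ * z i * Ω i * (z i)ᵀ) *ᵥ y i))
    (Bhat : Fin N × Fin p → ℝ) (hB : ∀ i a, Bhat (i, a) = βhat i a)
    (ghat : Fin N → Fin K) (k k' : Fin K) (hkk' : k ≠ k')
    (Gk Gk' : Finset (Fin N))
    (hGk : Gk = Finset.univ.filter (fun i => ghat i = k))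
    (hGk' : Gk' = Finset.univ.filter (fun i => ghat i = k'))
    (hGkne : Gk.Nonempty) (hGk'ne : Gk'.Nonempty)
    (v : Fin N → ℝ)
    (hv : ∀ i, v i = (if i ∈ Gk then (1 : ℝ) else 0) - (if i ∈ Gk' then 1 else 0))
    (hginv : ∀ c₀ : Fin K, IsUnit (∑ i' ∈ Finset.univ.filter (fun j => ghat j = c₀), A i').det)
    (w : Fin N → Matrix (Fin p) (Fin p) ℝ)
    (hw : ∀ i, w i = (∑ i' ∈ Finset.univ.filter (fun j => ghat j = ghat i), A i')⁻¹ * A i)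
    (θ : Matrix (Fin N × Fin p) (Fin p) ℝ)
    (hθ : ∀ i a b, θ (i, a) b = v i * w i b a)
    (hθθ : IsUnit (θᵀ * θ).det)
    (P : Matrix (Fin N × Fin p) (Fin N × Fin p) ℝ)
    (hP : P = θ * (θᵀ * θ)⁻¹ * θᵀ)
    (hPB : P *ᵥ Bhat ≠ 0)
    (ρ : ℝ) (hρ : ρ = eunorm (P *ᵥ Bhat))
    (c : Fin p → ℝ) (hc : c = (θᵀ * θ)⁻¹ *ᵥ (θᵀ *ᵥ Bhat))
    (Bφ : ℝ → Fin N × Fin p → ℝ)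
    (hBφ : ∀ φ, Bφ φ = φ • dir (P *ᵥ Bhat) + (1 - P) *ᵥ Bhat)
    (i i' : Fin N)
    (d : Fin p → ℝ)
    (hd : d = v i • ((w i)ᵀ *ᵥ c) - v i' • ((w i')ᵀ *ᵥ c))
    (a b γ : ℝ)
    (ha : a = qnorm (A i) (ρ⁻¹ • d))
    (hb : b = (2 / ρ) * (d ⬝ᵥ ((A i) *ᵥ (βhat i - βhat i' - d))))
    (hγ : γ = qnorm (A i) (βhat i - βhat i' - d)) :
    ∀ φ : ℝ,
      qnorm (A i) (blk (Bφ φ) i - blk (Bφ φ) i') = a * φ ^ 2 + b * φ + γ :=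
  gmm_block_difference_is_quadratic_in_phi_general N T p q x z Ω hΩ A hAdef βhat Bhat hB v w θ hθ P
    hP hPB ρ hρ c hc Bφ hBφ i i' d hd a b γ ha hb hγ

end
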